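/- arXiv:2604.07352 — 2 statements merged into one kernel-verified Lean document; each statement's English description precedes it below -/
import Mathlib

section
/- Let $n_1, n_2, n_3$ be positive integers such that $n_1 + 1 = n_2 + n_3$. If $n_2$ divides $n_1$ and $n_3$ divides $n_1$, then $\{n_1, 1\} = \{n_2, n_3\}$ as sets (i.e., either $n_2 = 1$ and $n_3 = n_1$, or $n_3 = 1$ and $n_2 = n_1$). -/
/-- If `n₁, n₂, n₃` are positive integers with `n₁ + 1 = n₂ + n₃` and both `n₂` and `n₃`
divide `n₁`, then `{n₁, 1} = {n₂, n₃}`. -/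
theorem stmt_0 (n1 n2 n3 : ℕ) (h1 : 0 < n1) (h2 : 0 < n2) (h3 : 0 < n3)
    (hsum : n1 + 1 = n2 + n3) (hd2 : n2 ∣ n1) (hd3 : n3 ∣ n1) :
    (n2 = 1 ∧ n3 = n1) ∨ (n3 = 1 ∧ n2 = n1) := by
  by_cases hn2 : n2 = 1
  · left; omega
  by_cases hn3 : n3 = 1
  · right; omega
  exfalso
  have d1 : n2 ∣ n3 - 1 := by
    have : n3 - 1 = n1 - n2 := by omega
    rw [this]; exact Nat.dvd_sub hd2 dvd_rfl
  have d2 : n3 ∣ n2 - 1 := by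
    have : n2 - 1 = n1 - n3 := by omega
    rw [this]; exact Nat.dvd_sub hd3 dvd_rfl
  have l1 : n2 ≤ n3 - 1 := Nat.le_of_dvd (by omega) d1
  have l2 : n3 ≤ n2 - 1 := Nat.le_of_dvd (by omega) d2
  omega
end

section
/- For any partition $\lambda$ of length at most $d$, the determinant $\det\big([x_i|b]^{\lambda_j + d - j}(1 - x_i)^{j-1}\big)_{1 \le i, j \le d}$ is divisible by the Vandermonde product $\prod_{1 \le i < j \le d}(x_i - x_j)$ in the polynomial ring $\mathbb{Z}[b_1, b_2, \ldots][x_1, \ldots, x_d]$; consequently the factorial Grothendieck polynomial $G_\lambda(x|b)$ is a polynomial. -/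
/-!
Substituting `xⱼ ↦ xᵢ` makes rows `i` and `j` of the matrix equal, so the determinant vanishes
there and `xᵢ - xⱼ` divides it. The linear forms `xᵢ - xⱼ` (`i < j`) are pairwise non-associated
primes, so their product divides the determinant as well.
-/

open MvPolynomial

theorem Finset.prod_dvd_of_prime_of_pairwise_not_associated {M₀ ι : Type*} [CommMonoidWithZero M₀]
    [IsCancelMulZero M₀] {s : Finset ι} {f : ι → M₀} {n : M₀} (hprime : ∀ i ∈ s, Prime (f i))
    (hassoc : (s : Set ι).Pairwise fun i j => ¬Associated (f i) (f j))
    (hdvd : ∀ i ∈ s, f i ∣ n) : ∏ i ∈ s, f i ∣ n := by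
  classical
  induction s using Finset.induction_on generalizing n with
  | empty => simp
  | insert a s ha ih =>
    simp only [Finset.mem_insert, forall_eq_or_imp] at hprime hdvd
    rw [Finset.coe_insert] at hassoc
    obtain ⟨k, rfl⟩ := hdvd.1
    rw [Finset.prod_insert ha]
    refine mul_dvd_mul_left _ (ih hprime.2 (hassoc.mono (Set.subset_insert _ _)) fun i hi => ?_)
    refine ((hprime.2 i hi).dvd_or_dvd (hdvd.2 i hi)).resolve_left fun hia => ?_
    exact hassoc (Set.mem_insert_of_mem _ hi) (Set.mem_insert _ _) (by rintro rfl; exact ha hi)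
      ((hprime.2 i hi).associated_of_dvd hprime.1 hia)

namespace MvPolynomial

variable {R σ : Type*}

theorem prime_X_sub_X [CommRing R] [IsDomain R] [DecidableEq σ] {s t : σ} (h : t ≠ s) :
    Prime (X s - X t : MvPolynomial σ R) := by
  let e : MvPolynomial σ R ≃ₐ[R] Polynomial (MvPolynomial {b : σ // b ≠ s} R) :=
    (renameEquiv R (Equiv.optionSubtypeNe s).symm).trans (optionEquivLeft R _)
  have he : e (X s - X t) = Polynomial.X - Polynomial.C (X ⟨t, h⟩) := by
    simp [e, Equiv.optionSubtypeNe_symm_of_ne h,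
      optionEquivLeft_X_none, optionEquivLeft_X_some]
  rw [← MulEquiv.prime_iff e.toMulEquiv]
  exact he ▸ Polynomial.prime_X_sub_C _

theorem X_sub_X_dvd_of_aeval_update_eq_zero [CommRing R] [DecidableEq σ] {s t : σ}
    {f : MvPolynomial σ R}
    (h : aeval (Function.update (X : σ → MvPolynomial σ R) t (X s)) f = 0) :
    (X s - X t : MvPolynomial σ R) ∣ f := by
  set I := Ideal.span {(X s - X t : MvPolynomial σ R)}
  have hquot : (Ideal.Quotient.mkₐ R I).comp (aeval (Function.update X t (X s))) =
      Ideal.Quotient.mkₐ R I := by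
    refine algHom_ext fun k => ?_
    obtain rfl | hk := eq_or_ne k t
    · simp [Ideal.Quotient.eq, I]
    · simp [Function.update_of_ne hk]
  rw [← Ideal.mem_span_singleton, ← Ideal.Quotient.eq_zero_iff_mem, ← Ideal.Quotient.mkₐ_eq_mk R,
    ← hquot, AlgHom.comp_apply, h, map_zero]

theorem eval_single_X_sub_X_ne_zero_iff [CommRing R] [Nontrivial R] [DecidableEq σ]
    {a b : σ} (hab : a ≠ b) (v : σ) :
    eval (Pi.single v 1) (X a - X b : MvPolynomial σ R) ≠ 0 ↔ v = a ∨ v = b := by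
  obtain rfl | hva := eq_or_ne v a
  · simp [hab.symm]
  obtain rfl | hvb := eq_or_ne v b
  · simp [hab]
  simp [hva, hvb, hva.symm, hvb.symm]

/-- Associated polynomials vanish at the same points, and the points `Pi.single v 1` at which
`X a - X b` does not vanish recover `{a, b}`. -/
theorem mem_pair_of_associated_X_sub_X [CommRing R] [Nontrivial R] [DecidableEq σ]
    {a b c d : σ} (hab : a ≠ b) (hcd : c ≠ d)
    (h : Associated (X a - X b : MvPolynomial σ R) (X c - X d)) {v : σ} (hv : v = c ∨ v = d) :
    v = a ∨ v = b := by
  rw [← eval_single_X_sub_X_ne_zero_iff (R := R) hab]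
  intro hzero
  obtain ⟨q, hq⟩ := h.dvd
  exact (eval_single_X_sub_X_ne_zero_iff (R := R) hcd v).2 hv (by rw [hq, map_mul, hzero, zero_mul])

theorem prod_X_sub_X_dvd_det [CommRing R] [IsDomain R] [DecidableEq σ] {n : Type*} [Fintype n]
    [LinearOrder n] [LocallyFiniteOrderTop n] {x : n → σ} (hx : Function.Injective x)
    (M : Matrix n n (MvPolynomial σ R))
    (hM : ∀ i j, i < j →
      aeval (Function.update (X : σ → MvPolynomial σ R) (x j) (X (x i))) ∘ M j =
        aeval (Function.update X (x j) (X (x i))) ∘ M i) :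
    ∏ i, ∏ j ∈ Finset.Ioi i, (X (x i) - X (x j) : MvPolynomial σ R) ∣ M.det := by
  rw [Finset.prod_sigma']
  refine Finset.prod_dvd_of_prime_of_pairwise_not_associated (fun p hp => ?_) ?_ fun p hp => ?_
  · exact prime_X_sub_X (hx.ne (Finset.mem_Ioi.1 (Finset.mem_sigma.1 hp).2).ne')
  · rintro ⟨a, b⟩ hab ⟨c, d⟩ hcd hne hassoc
    simp only [Finset.coe_sigma, Set.mem_sigma_iff, Finset.coe_univ, Set.mem_univ,
      Finset.coe_Ioi, Set.mem_Ioi, true_and] at hab hcd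
    have hxab := hx.ne hab.ne
    have hxcd := hx.ne hcd.ne
    have hc := mem_pair_of_associated_X_sub_X hxab hxcd hassoc (.inl rfl)
    have hd := mem_pair_of_associated_X_sub_X hxab hxcd hassoc (.inr rfl)
    simp only [hx.eq_iff] at hc hd
    apply hne
    rcases hc with rfl | rfl <;> rcases hd with rfl | rfl <;> first | rfl | order
  · obtain ⟨i, j⟩ := p
    have hij : i < j := Finset.mem_Ioi.1 (Finset.mem_sigma.1 hp).2
    refine X_sub_X_dvd_of_aeval_update_eq_zero ?_
    rw [AlgHom.map_det]
    exact Matrix.det_zero_of_row_eq hij.ne (hM i j hij).symm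

end MvPolynomial

theorem stmt_5_general (d : ℕ) (lam : Fin d → ℕ) :
    (∏ i : Fin d, ∏ j ∈ Finset.Ioi i,
        (X (Sum.inl i) - X (Sum.inl j) : MvPolynomial (Fin d ⊕ ℕ) ℤ)) ∣
      Matrix.det (Matrix.of fun i j : Fin d =>
        (∏ m ∈ Finset.range (lam j + (d - 1 - (j : ℕ))),
          (X (Sum.inl i) + X (Sum.inr m) - X (Sum.inl i) * X (Sum.inr m)
            : MvPolynomial (Fin d ⊕ ℕ) ℤ)) * (1 - X (Sum.inl i)) ^ (j : ℕ)) := by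
  refine MvPolynomial.prod_X_sub_X_dvd_det Sum.inl_injective _ fun i j hij => funext fun c => ?_
  simp [hij.ne]

/-- The determinant `det([xᵢ|b]^{λⱼ+d-j} (1-xᵢ)^{j-1})` is divisible by the Vandermonde
product `∏_{i<j} (xᵢ - xⱼ)` in `ℤ[b][x]`. -/
theorem stmt_5 (d : ℕ) (lam : Fin d → ℕ) (hlam : ∀ i j : Fin d, i ≤ j → lam j ≤ lam i) :
    (∏ i : Fin d, ∏ j ∈ Finset.Ioi i,
        (X (Sum.inl i) - X (Sum.inl j) : MvPolynomial (Fin d ⊕ ℕ) ℤ)) ∣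
      Matrix.det (Matrix.of fun i j : Fin d =>
        (∏ m ∈ Finset.range (lam j + (d - 1 - (j : ℕ))),
          (X (Sum.inl i) + X (Sum.inr m) - X (Sum.inl i) * X (Sum.inr m)
            : MvPolynomial (Fin d ⊕ ℕ) ℤ)) * (1 - X (Sum.inl i)) ^ (j : ℕ)) :=
  stmt_5_general d lam
end
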